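/- arXiv:2512.06825 — 7 statements merged into one kernel-verified Lean document; each statement's English description precedes it below -/
import Mathlib

section
/- Let H be a symmetric positive definite matrix with H ⪰ c·I for some c > 0, and let φ_k(x) = ⟨g, x − x_k⟩ + ½⟨x − x_k, H(x − x_k)⟩ + h(x). Suppose x_{k+1} satisfies: there exists ξ ∈ ∂φ_k(x_{k+1}) with ‖ξ‖ ≤ (η/2)‖x_{k+1} − x_k‖. Define G̃(x_k) = x_k − prox_h(x_k − g). Then ‖G̃(x_k)‖ ≤ (1 + η/2 + ‖H‖)·‖x_k − x_{k+1}‖. -/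
/-!
Write `φₖ = q + h` with `q` the quadratic model, whose gradient at `x_{k+1}` is
`g + H (x_{k+1} - xₖ)`. Since `h` is convex, `ξ - ∇q(x_{k+1})` is a subgradient of `h` at
`x_{k+1}`, while `(xₖ - g) - p` is a subgradient of `h` at `p = prox_h(xₖ - g)`. Monotonicity
of `∂h` then places `d = xₖ - p` in the ball with diameter `[r, w]`, where `r = ξ - H (x_{k+1} - xₖ)`
and `w = xₖ - x_{k+1}`, so `‖d‖ ≤ ‖r‖ + ‖w‖ ≤ (η/2 + ‖H‖) ‖w‖ + ‖w‖`.
-/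

open scoped RealInnerProductSpace

section

variable {E : Type*} [NormedAddCommGroup E] [InnerProductSpace ℝ E]

def HasSubgradientAt (f : E → ℝ) (s x : E) : Prop :=
  ∀ z, f x + ⟪s, z - x⟫ ≤ f z

theorem HasSubgradientAt.inner_sub_sub_nonneg {f : E → ℝ} {a b p x : E}
    (ha : HasSubgradientAt f a p) (hb : HasSubgradientAt f b x) :
    0 ≤ ⟪a - b, p - x⟫ := by
  have hap := ha x
  have hbx := hb p
  rw [← neg_sub p x, inner_neg_right] at hap
  rw [inner_sub_left]
  linarith

/-- Compare `f + h` along the segment from `x` to `z` with the convex combination of the values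
of `h`, divide by the step and let it go to `0`. -/
theorem ConvexOn.hasSubgradientAt_sub_of_hasGradientAt [CompleteSpace E] {f h : E → ℝ}
    {w x ξ : E} (hconv : ConvexOn ℝ Set.univ h) (hf : HasGradientAt f w x)
    (hξ : HasSubgradientAt (f + h) ξ x) : HasSubgradientAt h (ξ - w) x := by
  intro z
  set v := z - x
  have hline : HasDerivAt (fun t : ℝ => f (x + t • v)) ⟪w, v⟫ 0 := by
    have hpath := ((hasDerivAt_id (0 : ℝ)).smul_const v).const_add x
    simpa [Function.comp_def] using hf.hasFDerivAt.comp_hasDerivAt_of_eq 0 hpath (by simp)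
  have hslope := hline.tendsto_slope_zero_right
  simp only [zero_add, zero_smul, add_zero] at hslope
  suffices h x + ⟪ξ, v⟫ - h z ≤ ⟪w, v⟫ by rw [inner_sub_left]; linarith
  refine ge_of_tendsto hslope ?_
  filter_upwards [Ioo_mem_nhdsGT (zero_lt_one' ℝ)] with t ⟨ht0, ht1⟩
  have hcvx : h (x + t • v) ≤ (1 - t) * h x + t * h z := by
    have hseg : x + t • v = (1 - t) • x + t • z := by
      simp only [v, smul_sub, sub_smul, one_smul]; abel
    rw [hseg]
    exact hconv.2 trivial trivial (by linarith) ht0.le (by ring)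
  have hsub := hξ (x + t • v)
  simp only [Pi.add_apply, add_sub_cancel_left, real_inner_smul_right] at hsub
  rw [smul_eq_mul, le_inv_mul_iff₀ ht0]
  nlinarith

theorem norm_sub_le_norm_add_of_inner_nonneg {a b : E} (hab : 0 ≤ ⟪a, b⟫) :
    ‖a - b‖ ≤ ‖a + b‖ := by
  rw [← sq_le_sq₀ (norm_nonneg _) (norm_nonneg _), norm_add_sq_real, norm_sub_sq_real]
  linarith

/-- `d` lies in the closed ball with diameter `[r, w]`. -/
theorem norm_le_add_of_inner_sub_sub_nonneg {d r w : E} (h : 0 ≤ ⟪d - r, w - d⟫) :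
    ‖d‖ ≤ ‖r‖ + ‖w‖ := by
  have hball := norm_sub_le_norm_add_of_inner_nonneg h
  have h2d : (2 : ℝ) • d = (r + w) + ((d - r) - (w - d)) := by
    rw [two_smul]; abel
  have hdiam : (d - r) + (w - d) = w - r := by abel
  rw [hdiam] at hball
  have htri := norm_add_le (r + w) ((d - r) - (w - d))
  rw [← h2d, norm_smul, Real.norm_two] at htri
  linarith [norm_add_le r w, norm_sub_le w r]

noncomputable def quadraticModel (g xk : E) (H : E →L[ℝ] E) (z : E) : ℝ :=
  ⟪g, z - xk⟫ + (1 / 2) * ⟪z - xk, H (z - xk)⟫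

theorem hasGradientAt_quadraticModel [CompleteSpace E] (g xk x : E) {H : E →L[ℝ] E}
    (hH : (H : E →ₗ[ℝ] E).IsSymmetric) :
    HasGradientAt (quadraticModel g xk H) (g + H (x - xk)) x := by
  have hshift : HasFDerivAt (fun z : E => z - xk) (ContinuousLinearMap.id ℝ E) x :=
    (hasFDerivAt_id x).sub_const xk
  have hquad := hshift.inner ℝ (H.hasFDerivAt.comp x hshift)
  have hlin := (hasFDerivAt_const g x).inner ℝ hshift
  refine (hlin.add (hquad.const_mul (1 / 2))).congr_fderiv ?_
  refine ContinuousLinearMap.ext fun v => ?_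
  have hHv : ⟪x - xk, H v⟫ = ⟪H (x - xk), v⟫ := (hH _ _).symm
  simp only [Function.comp_apply, add_apply, ContinuousLinearMap.comp_apply,
    ContinuousLinearMap.prod_apply, zero_apply, ContinuousLinearMap.id_apply,
    smul_apply, fderivInnerCLM_apply, inner_zero_left, add_zero, smul_eq_mul,
    map_add, InnerProductSpace.toDual_apply_apply, add_right_inj]
  rw [hHv, real_inner_comm (H (x - xk)) v]
  ring

end

theorem stmt1_general {n : ℕ}
    (h : EuclideanSpace ℝ (Fin n) → ℝ) (hconv : ConvexOn ℝ Set.univ h)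
    (prox : EuclideanSpace ℝ (Fin n) → EuclideanSpace ℝ (Fin n))
    -- characterization of the proximal mapping of the convex function h
    (hprox : ∀ u p, p = prox u ↔ ∀ z, h p + ⟪u - p, z - p⟫ ≤ h z)
    (g xk x1 ξ : EuclideanSpace ℝ (Fin n))
    (η : ℝ)
    (H : EuclideanSpace ℝ (Fin n) →L[ℝ] EuclideanSpace ℝ (Fin n))
    (hsym : ∀ u v, ⟪H u, v⟫ = ⟪u, H v⟫)
    (φ : EuclideanSpace ℝ (Fin n) → ℝ)
    (hφ : ∀ z, φ z = ⟪g, z - xk⟫ + (1 / 2) * ⟪z - xk, H (z - xk)⟫ + h z)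
    -- ξ is a subgradient of φ at x1 with the inexactness bound
    (hξ : ∀ z, φ x1 + ⟪ξ, z - x1⟫ ≤ φ z)
    (hξn : ‖ξ‖ ≤ η / 2 * ‖x1 - xk‖) :
    ‖xk - prox (xk - g)‖ ≤ (1 + η / 2 + ‖H‖) * ‖xk - x1‖ := by
  set p := prox (xk - g)
  have hp : HasSubgradientAt h ((xk - g) - p) p := (hprox _ p).mp rfl
  have hφq : φ = quadraticModel g xk H + h := funext hφ
  have hx1 : HasSubgradientAt h (ξ - (g + H (x1 - xk))) x1 :=
    hconv.hasSubgradientAt_sub_of_hasGradientAt (hasGradientAt_quadraticModel g xk x1 hsym)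
      (hφq ▸ hξ)
  have hmono := hp.inner_sub_sub_nonneg hx1
  have hball : ‖xk - p‖ ≤ ‖ξ - H (x1 - xk)‖ + ‖xk - x1‖ :=
    norm_le_add_of_inner_sub_sub_nonneg (by convert hmono using 2 <;> abel)
  calc ‖xk - p‖ ≤ ‖ξ‖ + ‖H (x1 - xk)‖ + ‖xk - x1‖ := by
        linarith [norm_sub_le ξ (H (x1 - xk))]
    _ ≤ η / 2 * ‖xk - x1‖ + ‖H‖ * ‖xk - x1‖ + ‖xk - x1‖ := by
        rw [norm_sub_rev x1 xk] at hξn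
        gcongr
        simpa only [norm_sub_rev x1 xk] using H.le_opNorm (x1 - xk)
    _ = (1 + η / 2 + ‖H‖) * ‖xk - x1‖ := by ring

/-- If `H` is a symmetric positive definite operator with `H ⪰ c·I`,
`φₖ(x) = ⟨g, x − xₖ⟩ + ½⟨x − xₖ, H(x − xₖ)⟩ + h(x)`, and `x_{k+1}` admits a
subgradient `ξ ∈ ∂φₖ(x_{k+1})` with `‖ξ‖ ≤ (η/2)‖x_{k+1} − xₖ‖`, then
`‖G̃(xₖ)‖ ≤ (1 + η/2 + ‖H‖)‖xₖ − x_{k+1}‖` where `G̃(xₖ) = xₖ − prox_h(xₖ − g)`. -/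
theorem stmt1 {n : ℕ}
    (h : EuclideanSpace ℝ (Fin n) → ℝ) (hconv : ConvexOn ℝ Set.univ h)
    (prox : EuclideanSpace ℝ (Fin n) → EuclideanSpace ℝ (Fin n))
    -- characterization of the proximal mapping of the convex function h
    (hprox : ∀ u p, p = prox u ↔ ∀ z, h p + ⟪u - p, z - p⟫ ≤ h z)
    (g xk x1 ξ : EuclideanSpace ℝ (Fin n))
    (c η : ℝ) (hc : 0 < c) (hη0 : 0 ≤ η) (hη1 : η < 1)
    (H : EuclideanSpace ℝ (Fin n) →L[ℝ] EuclideanSpace ℝ (Fin n))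
    (hsym : ∀ u v, ⟪H u, v⟫ = ⟪u, H v⟫)
    (hpd : ∀ v, c * ‖v‖ ^ 2 ≤ ⟪v, H v⟫)
    (φ : EuclideanSpace ℝ (Fin n) → ℝ)
    (hφ : ∀ z, φ z = ⟪g, z - xk⟫ + (1 / 2) * ⟪z - xk, H (z - xk)⟫ + h z)
    -- ξ is a subgradient of φ at x1 with the inexactness bound
    (hξ : ∀ z, φ x1 + ⟪ξ, z - x1⟫ ≤ φ z)
    (hξn : ‖ξ‖ ≤ η / 2 * ‖x1 - xk‖) :
    ‖xk - prox (xk - g)‖ ≤ (1 + η / 2 + ‖H‖) * ‖xk - x1‖ :=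
  stmt1_general h hconv prox hprox g xk x1 ξ η H hsym φ hφ hξ hξn
end

section
/- Let x̄_k be the exact minimizer of the strongly convex function φ_k(x) = ⟨g_k, x − x_k⟩ + ½⟨x − x_k, H_k(x − x_k)⟩ + h(x) where H_k ⪰ c_k·I with c_k > 0, and let x_{k+1} be an inexact minimizer in the sense that r_k(x_{k+1}) := x_{k+1} − prox_h(x_{k+1} − (g_k + H_k(x_{k+1} − x_k))) satisfies ‖r_k(x_{k+1})‖ ≤ (η_k/2)‖x_k − x_{k+1}‖. Then ‖x_{k+1} − x̄_k‖ ≤ (η_k/(2 c_k))·(1 + ‖H_k‖)·‖x_k − x_{k+1}‖. -/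
/-!
Both points are characterised by subgradients of `h`: the prox inequality says that
`u - prox u` is a subgradient at `prox u = x_{k+1} - r_k`, where
`u = x_{k+1} - (g_k + H_k (x_{k+1} - x_k))`, and first-order optimality of the
smooth part of `φ_k` says that `-(g_k + H_k (x̄_k - x_k))` is a subgradient at `x̄_k`.
Monotonicity of the subdifferential turns these into `0 ≤ ⟪r_k - H_k d, d - r_k⟫` with
`d = x_{k+1} - x̄_k`, whence `c_k ‖d‖² ≤ ⟪d, H_k d⟫ ≤ (1 + ‖H_k‖) ‖r_k‖ ‖d‖`.
-/

open scoped RealInnerProductSpace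

open Set

section

variable {E : Type*} [NormedAddCommGroup E] [InnerProductSpace ℝ E]

def IsSubgradient (f : E → ℝ) (x ξ : E) : Prop :=
  ∀ z, f x + ⟪ξ, z - x⟫ ≤ f z

theorem IsSubgradient.inner_sub_nonneg {f : E → ℝ} {x y ξ ζ : E}
    (hξ : IsSubgradient f x ξ) (hζ : IsSubgradient f y ζ) : 0 ≤ ⟪ξ - ζ, x - y⟫ := by
  have hx := hξ y
  have hy := hζ x
  rw [← neg_sub x y, inner_neg_right] at hx
  rw [inner_sub_left]
  linarith

theorem ConvexOn.isSubgradient_neg_of_forall_le_add {h q : E → ℝ} {x g : E}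
    (hconv : ConvexOn ℝ univ h) (hq : HasFDerivAt q (innerSL ℝ g) x)
    (hmin : ∀ z, q x + h x ≤ q z + h z) : IsSubgradient h x (-g) := by
  intro z
  set b := z - x
  -- by convexity, `ψ t` dominates `(q + h) (x + t • b) - h x` on `[0, 1]`, with equality at `0`
  let ψ : ℝ → ℝ := fun t ↦ q (x + t • b) + t * (h z - h x)
  have hψ : HasDerivAt ψ (⟪g, b⟫ + (h z - h x)) 0 := by
    have hline : HasDerivAt (fun t : ℝ ↦ x + t • b) b 0 := by
      simpa using ((hasDerivAt_id (0 : ℝ)).smul_const b).const_add x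
    have hq' : HasFDerivAt q (innerSL ℝ g) (x + (0 : ℝ) • b) := by simpa using hq
    exact ((hq'.comp_hasDerivAt 0 hline).add ((hasDerivAt_id 0).mul_const (h z - h x))).congr_deriv
      (by simp)
  have hψmin : IsLocalMinOn ψ (Icc 0 1) 0 := by
    refine IsMinOn.localize fun t ⟨ht0, ht1⟩ ↦ ?_
    have hseg : h (x + t • b) ≤ (1 - t) * h x + t * h z := by
      have hpt : x + t • b = (1 - t) • x + t • z := by simp only [b]; module
      rw [hpt]
      exact hconv.2 (mem_univ x) (mem_univ z) (by linarith) ht0 (sub_add_cancel 1 t)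
    have hmin_t := hmin (x + t • b)
    show ψ 0 ≤ ψ t
    simp only [ψ, zero_smul, add_zero, zero_mul]
    linarith
  have hdir : (1 : ℝ) ∈ posTangentConeAt (Icc (0 : ℝ) 1) 0 :=
    mem_posTangentConeAt_of_segment_subset (by simp)
  have hslope := hψmin.hasFDerivWithinAt_nonneg hψ.hasFDerivAt.hasFDerivWithinAt hdir
  simp only [ContinuousLinearMap.toSpanSingleton_apply, one_smul] at hslope
  rw [inner_neg_left]
  linarith

theorem hasFDerivAt_quadratic_model {H : E →L[ℝ] E} (hH : (H : E →ₗ[ℝ] E).IsSymmetric)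
    (g x₀ x : E) :
    HasFDerivAt (fun z ↦ ⟪g, z - x₀⟫ + (1 / 2) * ⟪z - x₀, H (z - x₀)⟫)
      (innerSL ℝ (g + H (x - x₀))) x := by
  have hsub : HasFDerivAt (fun z : E ↦ z - x₀) (ContinuousLinearMap.id ℝ E) x :=
    (hasFDerivAt_id x).sub_const x₀
  refine (((innerSL ℝ g).hasFDerivAt.comp x hsub).add
    ((hsub.inner ℝ (H.hasFDerivAt.comp x hsub)).const_mul (1 / 2))).congr_fderiv ?_
  ext v
  simp only [ContinuousLinearMap.comp_id, Function.comp_apply, add_apply,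
    smul_apply, ContinuousLinearMap.comp_apply,
    ContinuousLinearMap.prod_apply, ContinuousLinearMap.id_apply, coe_innerSL_apply,
    fderivInnerCLM_apply, smul_eq_mul, inner_add_left]
  have hHsymm : ⟪H (x - x₀), v⟫ = ⟪x - x₀, H v⟫ := hH (x - x₀) v
  rw [← hHsymm, real_inner_comm (H (x - x₀)) v]
  ring

theorem mul_norm_le_of_inner_sub_apply_nonneg {H : E →L[ℝ] E} {c : ℝ}
    (hH : ∀ v, c * ‖v‖ ^ 2 ≤ ⟪v, H v⟫) {r d : E} (hrd : 0 ≤ ⟪r - H d, d - r⟫) :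
    c * ‖d‖ ≤ (1 + ‖H‖) * ‖r‖ := by
  have hquad : c * ‖d‖ ^ 2 ≤ (1 + ‖H‖) * ‖r‖ * ‖d‖ := by
    have hexp : ⟪r - H d, d - r⟫ = ⟪r, d⟫ - ‖r‖ ^ 2 + ⟪H d, r⟫ - ⟪d, H d⟫ := by
      simp only [inner_sub_left, inner_sub_right, real_inner_self_eq_norm_sq,
        real_inner_comm d (H d)]
      ring
    have hrd' := real_inner_le_norm r d
    have hHdr := (real_inner_le_norm (H d) r).trans
      (mul_le_mul_of_nonneg_right (H.le_opNorm d) (norm_nonneg r))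
    nlinarith [hH d, sq_nonneg ‖r‖]
  rcases (norm_nonneg d).eq_or_lt with hd | hd
  · rw [← hd, mul_zero]; positivity
  · exact le_of_mul_le_mul_right (by nlinarith) hd

end

theorem stmt3_general {n : ℕ}
    (h : EuclideanSpace ℝ (Fin n) → ℝ) (hconv : ConvexOn ℝ Set.univ h)
    (prox : EuclideanSpace ℝ (Fin n) → EuclideanSpace ℝ (Fin n))
    (hprox : ∀ u p, p = prox u ↔ ∀ z, h p + ⟪u - p, z - p⟫ ≤ h z)
    (gk xk x1 xbar : EuclideanSpace ℝ (Fin n))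
    (ck ηk : ℝ) (hck : 0 < ck)
    (Hk : EuclideanSpace ℝ (Fin n) →L[ℝ] EuclideanSpace ℝ (Fin n))
    (hsym : ∀ u v, ⟪Hk u, v⟫ = ⟪u, Hk v⟫)
    (hpd : ∀ v, ck * ‖v‖ ^ 2 ≤ ⟪v, Hk v⟫)
    (φk : EuclideanSpace ℝ (Fin n) → ℝ)
    (hφk : ∀ z, φk z = ⟪gk, z - xk⟫ + (1 / 2) * ⟪z - xk, Hk (z - xk)⟫ + h z)
    -- x̄ₖ is the exact minimizer of φₖ
    (hxbar : ∀ z, φk xbar ≤ φk z)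
    -- x_{k+1} is an inexact minimizer: the residual map is small
    (rk : EuclideanSpace ℝ (Fin n))
    (hrk : rk = x1 - prox (x1 - (gk + Hk (x1 - xk))))
    (hrn : ‖rk‖ ≤ ηk / 2 * ‖xk - x1‖) :
    ‖x1 - xbar‖ ≤ ηk / (2 * ck) * (1 + ‖Hk‖) * ‖xk - x1‖ := by
  set u := x1 - (gk + Hk (x1 - xk))
  have hprox_sub : IsSubgradient h (prox u) (u - prox u) := (hprox u (prox u)).mp rfl
  have hxbar_sub : IsSubgradient h xbar (-(gk + Hk (xbar - xk))) :=
    hconv.isSubgradient_neg_of_forall_le_add (hasFDerivAt_quadratic_model hsym gk xk xbar)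
      fun z ↦ by simpa only [hφk] using hxbar z
  have hmono := hprox_sub.inner_sub_nonneg hxbar_sub
  have hres : u - prox u - -(gk + Hk (xbar - xk)) = rk - Hk (x1 - xbar) := by
    rw [hrk]; simp only [u, map_sub]; abel
  have hstep : prox u - xbar = x1 - xbar - rk := by rw [hrk]; abel
  rw [hres, hstep] at hmono
  have hbound : ck * ‖x1 - xbar‖ ≤ (1 + ‖Hk‖) * (ηk / 2 * ‖xk - x1‖) :=
    (mul_norm_le_of_inner_sub_apply_nonneg hpd hmono).trans
      (mul_le_mul_of_nonneg_left hrn (by positivity))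
  rw [← le_div_iff₀' hck] at hbound
  exact hbound.trans_eq (by ring)

/-- distance from the inexact minimizer `x_{k+1}` of
`φₖ(x) = ⟨gₖ, x − xₖ⟩ + ½⟨x − xₖ, Hₖ(x − xₖ)⟩ + h(x)` to the exact minimizer `x̄ₖ`:
`‖x_{k+1} − x̄ₖ‖ ≤ (ηₖ/(2cₖ))(1 + ‖Hₖ‖)‖xₖ − x_{k+1}‖`. -/
theorem stmt3 {n : ℕ}
    (h : EuclideanSpace ℝ (Fin n) → ℝ) (hconv : ConvexOn ℝ Set.univ h)
    (prox : EuclideanSpace ℝ (Fin n) → EuclideanSpace ℝ (Fin n))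
    (hprox : ∀ u p, p = prox u ↔ ∀ z, h p + ⟪u - p, z - p⟫ ≤ h z)
    (gk xk x1 xbar : EuclideanSpace ℝ (Fin n))
    (ck ηk : ℝ) (hck : 0 < ck) (hηk : 0 ≤ ηk)
    (Hk : EuclideanSpace ℝ (Fin n) →L[ℝ] EuclideanSpace ℝ (Fin n))
    (hsym : ∀ u v, ⟪Hk u, v⟫ = ⟪u, Hk v⟫)
    (hpd : ∀ v, ck * ‖v‖ ^ 2 ≤ ⟪v, Hk v⟫)
    (φk : EuclideanSpace ℝ (Fin n) → ℝ)
    (hφk : ∀ z, φk z = ⟪gk, z - xk⟫ + (1 / 2) * ⟪z - xk, Hk (z - xk)⟫ + h z)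
    -- x̄ₖ is the exact minimizer of φₖ
    (hxbar : ∀ z, φk xbar ≤ φk z)
    -- x_{k+1} is an inexact minimizer: the residual map is small
    (rk : EuclideanSpace ℝ (Fin n))
    (hrk : rk = x1 - prox (x1 - (gk + Hk (x1 - xk))))
    (hrn : ‖rk‖ ≤ ηk / 2 * ‖xk - x1‖) :
    ‖x1 - xbar‖ ≤ ηk / (2 * ck) * (1 + ‖Hk‖) * ‖xk - x1‖ :=
  stmt3_general h hconv prox hprox gk xk x1 xbar ck ηk hck Hk hsym hpd φk hφk hxbar rk hrk hrn
end

section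
/- Negative-curvature descent: suppose f satisfies the cubic upper bound f(x + s) ≤ f(x) + ∇f(x)ᵀs + ½sᵀ∇²f(x)s + (L_h/6)‖s‖³ along the segment, ‖g − ∇f(x)‖ ≤ ε_g/3, p̂ is a unit vector with p̂ᵀ∇²f(x)p̂ ≤ −(17/18)ε_h where ε_h = √(L_h ε_g), d = −sign(gᵀp̂)·p̂, and α = (17/(12 L_h))·ε_h. Then f(x + α d) ≤ f(x) − (17/(10368 √L_h))·ε_g^{3/2}. -/
/-!
Plug the step `α d` into the cubic bound. Since `d` points against the sign of the approximate
slope `gᵀp̂`, the linear term is at most `α ‖g − ∇f(x)‖ ≤ α εg / 3`; the quadratic term is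
`α² p̂ᵀ∇²f(x)p̂ ≤ −(17/18) α² εh`; the cubic term is `(Lh/6) α³`. At `α = 17 εh / (12 Lh)`, using
`εh² = Lh εg`, this cubic model in `α` equals `−(17/10368) εh εg / Lh = −(17/10368) εg^{3/2} / √Lh`.
-/

open scoped RealInnerProductSpace

section CubicDescent

variable {E : Type*} [NormedAddCommGroup E] [InnerProductSpace ℝ E]

lemma inner_neg_smul_le_of_mul_inner_eq_abs {g gx p : E} {s : ℝ} (hs : |s| ≤ 1)
    (hsg : s * ⟪g, p⟫ = |⟪g, p⟫|) : ⟪gx, -s • p⟫ ≤ ‖g - gx‖ * ‖p‖ := by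
  have hsplit : ⟪gx, -s • p⟫ = -|⟪g, p⟫| + s * ⟪g - gx, p⟫ := by
    rw [real_inner_smul_right, inner_sub_left, ← hsg]; ring
  have herr : s * ⟪g - gx, p⟫ ≤ |⟪g - gx, p⟫| :=
    calc s * ⟪g - gx, p⟫ ≤ |s * ⟪g - gx, p⟫| := le_abs_self _
      _ = |s| * |⟪g - gx, p⟫| := abs_mul _ _
      _ ≤ |⟪g - gx, p⟫| := mul_le_of_le_one_left (abs_nonneg _) hs
  rw [hsplit]
  linarith [abs_nonneg ⟪g, p⟫, abs_real_inner_le_norm (g - gx) p]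

lemma inner_smul_map_smul (A : E →L[ℝ] E) (t : ℝ) (p : E) :
    ⟪t • p, A (t • p)⟫ = t ^ 2 * ⟪p, A p⟫ := by
  rw [map_smul, real_inner_smul_left, real_inner_smul_right]; ring

lemma cubic_bound_smul_le {f : E → ℝ} {x gx d : E} {A : E →L[ℝ] E} {L δ κ α : ℝ}
    (hcubic : ∀ u, f (x + u) ≤ f x + ⟪gx, u⟫ + 1 / 2 * ⟪u, A u⟫ + L / 6 * ‖u‖ ^ 3)
    (hd : ‖d‖ = 1) (hgrad : ⟪gx, d⟫ ≤ δ) (hcurv : ⟪d, A d⟫ ≤ κ) (hα : 0 ≤ α) :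
    f (x + α • d) ≤ f x + (α * δ + 1 / 2 * α ^ 2 * κ + L / 6 * α ^ 3) := by
  have hnorm : ‖α • d‖ = α := by rw [norm_smul, hd, mul_one, Real.norm_of_nonneg hα]
  have hlin : ⟪gx, α • d⟫ ≤ α * δ := by
    rw [real_inner_smul_right]; exact mul_le_mul_of_nonneg_left hgrad hα
  have hquad : ⟪α • d, A (α • d)⟫ ≤ α ^ 2 * κ := by
    rw [inner_smul_map_smul]; exact mul_le_mul_of_nonneg_left hcurv (sq_nonneg α)
  have hstep := hcubic (α • d)
  rw [hnorm] at hstep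
  linarith

end CubicDescent

lemma cubic_model_at_negative_curvature_step {L εg εh : ℝ} (hL : L ≠ 0)
    (hεh : εh ^ 2 = L * εg) :
    17 / (12 * L) * εh * (εg / 3) + 1 / 2 * (17 / (12 * L) * εh) ^ 2 * (-(17 / 18) * εh)
      + L / 6 * (17 / (12 * L) * εh) ^ 3 = -(17 / 10368) * (εh * εg / L) := by
  field_simp
  -- `323606016` is the coefficient of `εh ^ 3` once the denominators are cleared
  linear_combination (-323606016 * εh) * hεh

lemma sqrt_mul_mul_div_eq_rpow_div_sqrt {L ε : ℝ} (hL : 0 < L) (hε : 0 < ε) :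
    √(L * ε) * ε / L = ε ^ ((3 : ℝ) / 2) / √L := by
  have hpow : ε ^ ((3 : ℝ) / 2) = ε * √ε := by
    rw [show (3 : ℝ) / 2 = 1 + 1 / 2 by norm_num, Real.rpow_add hε, Real.rpow_one,
      ← Real.sqrt_eq_rpow]
  rw [Real.sqrt_mul hL.le, hpow, div_eq_div_iff hL.ne' (Real.sqrt_pos.2 hL).ne']
  linear_combination ε * √ε * Real.mul_self_sqrt hL.le

theorem stmt10_general {n : ℕ}
    (f : EuclideanSpace ℝ (Fin n) → ℝ)
    (gx g x p d : EuclideanSpace ℝ (Fin n))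
    (A : EuclideanSpace ℝ (Fin n) →L[ℝ] EuclideanSpace ℝ (Fin n))
    (Lh εg εh α s : ℝ) (hLh : 0 < Lh) (hεg : 0 < εg)
    (hεh : εh = Real.sqrt (Lh * εg))
    -- cubic upper bound along the step
    (hcubic : ∀ u : EuclideanSpace ℝ (Fin n),
      f (x + u) ≤ f x + ⟪gx, u⟫ + (1 / 2) * ⟪u, A u⟫ + Lh / 6 * ‖u‖ ^ 3)
    (hg : ‖g - gx‖ ≤ εg / 3)
    (hp : ‖p‖ = 1)
    (hcurv : ⟪p, A p⟫ ≤ -(17 / 18) * εh)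
    -- s = sign(gᵀp̂)
    (hs : (s = 1 ∨ s = -1) ∧ s * ⟪g, p⟫ = |⟪g, p⟫|)
    (hd : d = -s • p)
    (hα : α = 17 / (12 * Lh) * εh) :
    f (x + α • d) ≤ f x - 17 / (10368 * Real.sqrt Lh) * εg ^ ((3 : ℝ) / 2) := by
  have hs1 : |s| = 1 := by rcases hs.1 with rfl | rfl <;> norm_num
  have hs2 : s ^ 2 = 1 := by rcases hs.1 with rfl | rfl <;> norm_num
  have hεh2 : εh ^ 2 = Lh * εg := by rw [hεh, Real.sq_sqrt (by positivity)]
  have hdnorm : ‖d‖ = 1 := by rw [hd, norm_smul, norm_neg, Real.norm_eq_abs, hs1, hp, one_mul]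
  have hgrad : ⟪gx, d⟫ ≤ εg / 3 := by
    rw [hd]
    exact (inner_neg_smul_le_of_mul_inner_eq_abs hs1.le hs.2).trans (by rwa [hp, mul_one])
  have hdcurv : ⟪d, A d⟫ ≤ -(17 / 18) * εh := by
    rwa [hd, inner_smul_map_smul, neg_sq, hs2, one_mul]
  have hαpos : 0 ≤ α := by rw [hα, hεh]; positivity
  calc f (x + α • d)
      ≤ f x + (α * (εg / 3) + 1 / 2 * α ^ 2 * (-(17 / 18) * εh) + Lh / 6 * α ^ 3) :=
        cubic_bound_smul_le hcubic hdnorm hgrad hdcurv hαpos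
    _ = f x - 17 / 10368 * (εh * εg / Lh) := by
        rw [hα, cubic_model_at_negative_curvature_step hLh.ne' hεh2]; ring
    _ = f x - 17 / (10368 * Real.sqrt Lh) * εg ^ ((3 : ℝ) / 2) := by
        rw [hεh, sqrt_mul_mul_div_eq_rpow_div_sqrt hLh hεg]; ring

/-- negative-curvature descent. Under the cubic upper bound for `f`
with Hessian `A = ∇²f(x)` and gradient `gx = ∇f(x)`, if `‖g − gx‖ ≤ ε_g/3`,
`p̂` is a unit vector with `p̂ᵀ A p̂ ≤ −(17/18)ε_h` where `ε_h = √(L_h ε_g)`,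
`d = −sign(gᵀp̂)·p̂` and `α = (17/(12 L_h))ε_h`, then
`f(x + α d) ≤ f(x) − (17/(10368 √L_h))·ε_g^{3/2}`. -/
theorem stmt10 {n : ℕ}
    (f : EuclideanSpace ℝ (Fin n) → ℝ)
    (gx g x p d : EuclideanSpace ℝ (Fin n))
    (A : EuclideanSpace ℝ (Fin n) →L[ℝ] EuclideanSpace ℝ (Fin n))
    (hAsym : ∀ u v, ⟪A u, v⟫ = ⟪u, A v⟫)
    (Lh εg εh α s : ℝ) (hLh : 0 < Lh) (hεg : 0 < εg)
    (hεh : εh = Real.sqrt (Lh * εg))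
    -- cubic upper bound along the step
    (hcubic : ∀ u : EuclideanSpace ℝ (Fin n),
      f (x + u) ≤ f x + ⟪gx, u⟫ + (1 / 2) * ⟪u, A u⟫ + Lh / 6 * ‖u‖ ^ 3)
    (hg : ‖g - gx‖ ≤ εg / 3)
    (hp : ‖p‖ = 1)
    (hcurv : ⟪p, A p⟫ ≤ -(17 / 18) * εh)
    -- s = sign(gᵀp̂)
    (hs : (s = 1 ∨ s = -1) ∧ s * ⟪g, p⟫ = |⟪g, p⟫|)
    (hd : d = -s • p)
    (hα : α = 17 / (12 * Lh) * εh) :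
    f (x + α • d) ≤ f x - 17 / (10368 * Real.sqrt Lh) * εg ^ ((3 : ℝ) / 2) :=
  stmt10_general f gx g x p d A Lh εg εh α s hLh hεg hεh hcubic hg hp hcurv hs hd hα
end

section
/- Let Q be symmetric with Q + 2ε_h·I ⪰ (ε_h/2)·I, let d satisfy the CG property rᵀd = 0 where r = (Q + 2ε_h I)d + g. Then for every α ∈ [0, 1]: α·gᵀd + (α²/2)·dᵀQd ≤ −(α/4)·ε_h·‖d‖². -/
open scoped RealInnerProductSpace

/- Orthogonality of the residual gives `gᵀd = -dᵀQd - 2ε_h‖d‖²`, so the left side equals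
`-(α - α²/2) dᵀQd - 2αε_h‖d‖²`. As `α - α²/2 ≥ 0` for `α ∈ [0, 2]`, the curvature bound
`dᵀQd ≥ -(3/2)ε_h‖d‖²` bounds this by `-(α/4 + 3α²/4)ε_h‖d‖²`. -/

theorem quadratic_model_le_of_curvature_bound {q N ε α : ℝ} (hε : 0 ≤ ε) (hN : 0 ≤ N)
    (hq : ε / 2 * N ≤ q + 2 * ε * N) (hα₀ : 0 ≤ α) (hα₂ : α ≤ 2) :
    α * (-q - 2 * ε * N) + α ^ 2 / 2 * q ≤ -(α / 4) * ε * N := by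
  have hstep : 0 ≤ α - α ^ 2 / 2 := by nlinarith
  nlinarith [mul_nonneg hstep (by linarith : 0 ≤ q + 3 / 2 * ε * N),
    mul_nonneg hα₀ (mul_nonneg hε hN), mul_nonneg (sq_nonneg α) (mul_nonneg hε hN)]

section InnerProductSpace

variable {E : Type*} [NormedAddCommGroup E] [InnerProductSpace ℝ E]

theorem inner_eq_of_inner_add_smul_add_eq_zero {u d g : E} {c : ℝ}
    (h : ⟪u + c • d + g, d⟫ = 0) : ⟪g, d⟫ = -⟪d, u⟫ - c * ‖d‖ ^ 2 := by
  rw [inner_add_left, inner_add_left, real_inner_smul_left, real_inner_self_eq_norm_sq,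
    real_inner_comm] at h
  linarith

theorem inner_add_sq_mul_inner_le_of_residual_orthogonal (Q : E →L[ℝ] E) {ε α : ℝ}
    (hε : 0 ≤ ε) {g d : E} (hpd : ε / 2 * ‖d‖ ^ 2 ≤ ⟪d, Q d + (2 * ε) • d⟫)
    (horth : ⟪Q d + (2 * ε) • d + g, d⟫ = 0) (hα₀ : 0 ≤ α) (hα₂ : α ≤ 2) :
    α * ⟪g, d⟫ + α ^ 2 / 2 * ⟪d, Q d⟫ ≤ -(α / 4) * ε * ‖d‖ ^ 2 := by
  rw [inner_add_right, real_inner_smul_right, real_inner_self_eq_norm_sq] at hpd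
  rw [inner_eq_of_inner_add_smul_add_eq_zero horth]
  exact quadratic_model_le_of_curvature_bound hε (sq_nonneg _) (by linarith) hα₀ hα₂

end InnerProductSpace

theorem stmt11_general {n : ℕ}
    (Q : EuclideanSpace ℝ (Fin n) →L[ℝ] EuclideanSpace ℝ (Fin n))
    (εh : ℝ) (hεh : 0 < εh)
    (hpd : ∀ v : EuclideanSpace ℝ (Fin n),
      εh / 2 * ‖v‖ ^ 2 ≤ ⟪v, Q v + (2 * εh) • v⟫)
    (g d r : EuclideanSpace ℝ (Fin n))
    (hr : r = Q d + (2 * εh) • d + g)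
    (horth : ⟪r, d⟫ = 0) :
    ∀ α : ℝ, α ∈ Set.Icc (0 : ℝ) 1 →
      α * ⟪g, d⟫ + α ^ 2 / 2 * ⟪d, Q d⟫ ≤ -(α / 4) * εh * ‖d‖ ^ 2 := by
  rintro α ⟨hα₀, hα₁⟩
  exact inner_add_sq_mul_inner_le_of_residual_orthogonal Q hεh.le (hpd d) (hr ▸ horth) hα₀
    (by linarith)

/-- if `Q + 2ε_h I ⪰ (ε_h/2)I` and the CG iterate `d` satisfies
`rᵀd = 0` for `r = (Q + 2ε_h I)d + g`, then for every `α ∈ [0,1]`,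
`α gᵀd + (α²/2) dᵀQd ≤ −(α/4)ε_h‖d‖²`. -/
theorem stmt11 {n : ℕ}
    (Q : EuclideanSpace ℝ (Fin n) →L[ℝ] EuclideanSpace ℝ (Fin n))
    (hQsym : ∀ u v, ⟪Q u, v⟫ = ⟪u, Q v⟫)
    (εh : ℝ) (hεh : 0 < εh)
    (hpd : ∀ v : EuclideanSpace ℝ (Fin n),
      εh / 2 * ‖v‖ ^ 2 ≤ ⟪v, Q v + (2 * εh) • v⟫)
    (g d r : EuclideanSpace ℝ (Fin n))
    (hr : r = Q d + (2 * εh) • d + g)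
    (horth : ⟪r, d⟫ = 0) :
    ∀ α : ℝ, α ∈ Set.Icc (0 : ℝ) 1 →
      α * ⟪g, d⟫ + α ^ 2 / 2 * ⟪d, Q d⟫ ≤ -(α / 4) * εh * ‖d‖ ^ 2 :=
  stmt11_general Q εh hεh hpd g d r hr horth
end

section
/- Approximate-Newton-step descent: suppose f satisfies the cubic upper bound f(x+s) ≤ f(x) + ∇f(x)ᵀs + ½sᵀ∇²f(x)s + (L_h/6)‖s‖³, ‖g − ∇f(x)‖ ≤ ε_g/3, ‖Q − ∇²f(x)‖ ≤ ε_h/18, and d satisfies α·gᵀd + (α²/2)·dᵀQd ≤ −(α/4)·ε_h·‖d‖² for all α ∈ [0,1], with ‖d‖ > 2ε_g/ε_h and ε_h = √(L_h ε_g). Then for α = √(2ε_g/(3(L_h+η)))/‖d‖ with η > 0, one has α ∈ (0,1) and f(x + α d) ≤ f(x) − (√2·η/(9√3·(L_h + η)^{3/2}))·ε_g^{3/2}. -/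
/-!
Bound `f (x + α d)` by the cubic model built from the approximate data `g`, `Q`; the
errors cost at most `(ε_g/3) α‖d‖ + (ε_h/36) α² ‖d‖²`. The decrease condition on `d` pays
`(α/4) ε_h ‖d‖²`, and since `2 ε_g < ε_h ‖d‖` and `α ≤ 1` what is left is a decrease of
`ε_g t / 9` along a step of length `t = α‖d‖`, against the cubic term `L_h t³ / 6`. The step
length `t = √(2ε_g / (3(L_h+η)))` makes the balance `-η ε_g t / (9 (L_h + η))`.
-/

open scoped RealInnerProductSpace

section ApproximateModel

variable {E : Type*} [NormedAddCommGroup E] [InnerProductSpace ℝ E]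

lemma inner_le_inner_add_norm_sub_mul (a b u : E) : ⟪a, u⟫ ≤ ⟪b, u⟫ + ‖b - a‖ * ‖u‖ := by
  have h := real_inner_le_norm (a - b) u
  rw [inner_sub_left, norm_sub_rev] at h
  linarith

lemma inner_self_map_le_add_norm_sub_mul (A Q : E →L[ℝ] E) (u : E) :
    ⟪u, A u⟫ ≤ ⟪u, Q u⟫ + ‖Q - A‖ * ‖u‖ ^ 2 := by
  have h : ⟪u, (A - Q) u⟫ ≤ ‖Q - A‖ * ‖u‖ ^ 2 := by
    calc ⟪u, (A - Q) u⟫ ≤ ‖u‖ * ‖(A - Q) u‖ := real_inner_le_norm _ _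
      _ ≤ ‖u‖ * (‖A - Q‖ * ‖u‖) := by gcongr; exact (A - Q).le_opNorm u
      _ = ‖Q - A‖ * ‖u‖ ^ 2 := by rw [norm_sub_rev]; ring
  rw [sub_apply, inner_sub_right] at h
  linarith

lemma le_approx_cubic_model {f : E → ℝ} {x gx g : E} {A Q : E →L[ℝ] E} {Lh : ℝ}
    (hcubic : ∀ u, f (x + u) ≤ f x + ⟪gx, u⟫ + 1 / 2 * ⟪u, A u⟫ + Lh / 6 * ‖u‖ ^ 3) (u : E) :
    f (x + u) ≤ f x + ⟪g, u⟫ + 1 / 2 * ⟪u, Q u⟫ + ‖g - gx‖ * ‖u‖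
      + ‖Q - A‖ / 2 * ‖u‖ ^ 2 + Lh / 6 * ‖u‖ ^ 3 := by
  linarith [hcubic u, inner_le_inner_add_norm_sub_mul gx g u,
    inner_self_map_le_add_norm_sub_mul A Q u]

lemma le_sub_of_sufficient_decrease {f : E → ℝ} {x gx g d : E} {A Q : E →L[ℝ] E}
    {Lh εg εh α : ℝ}
    (hcubic : ∀ u, f (x + u) ≤ f x + ⟪gx, u⟫ + 1 / 2 * ⟪u, A u⟫ + Lh / 6 * ‖u‖ ^ 3)
    (hg : ‖g - gx‖ ≤ εg / 3) (hQA : ‖Q - A‖ ≤ εh / 18)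
    (hα0 : 0 ≤ α) (hα1 : α ≤ 1)
    (hdec : α * ⟪g, d⟫ + α ^ 2 / 2 * ⟪d, Q d⟫ ≤ -(α / 4) * εh * ‖d‖ ^ 2)
    (hd : 2 * εg ≤ εh * ‖d‖) :
    f (x + α • d) ≤ f x - εg * (α * ‖d‖) / 9 + Lh / 6 * (α * ‖d‖) ^ 3 := by
  have hstep : ‖α • d‖ = α * ‖d‖ := by rw [norm_smul, Real.norm_of_nonneg hα0]
  have hmodel := le_approx_cubic_model (g := g) (Q := Q) hcubic (α • d)
  rw [hstep, real_inner_smul_right, map_smul, real_inner_smul_left, real_inner_smul_right]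
    at hmodel
  have hεh : 0 ≤ εh := by linarith [norm_nonneg (Q - A)]
  have hgrad : ‖g - gx‖ * (α * ‖d‖) ≤ εg / 3 * (α * ‖d‖) := by gcongr
  have hhess : ‖Q - A‖ / 2 * (α * ‖d‖) ^ 2 ≤ εh / 36 * (α * ‖d‖) ^ 2 :=
    mul_le_mul_of_nonneg_right (by linarith) (by positivity)
  have hsq : εh * (α * ‖d‖) ^ 2 ≤ εh * α * ‖d‖ ^ 2 := by
    have : α ^ 2 ≤ α := by nlinarith
    calc εh * (α * ‖d‖) ^ 2 = εh * ‖d‖ ^ 2 * α ^ 2 := by ring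
      _ ≤ εh * ‖d‖ ^ 2 * α := by gcongr
      _ = εh * α * ‖d‖ ^ 2 := by ring
  have hlarge : 2 * εg * (α * ‖d‖) ≤ εh * α * ‖d‖ ^ 2 := by
    calc 2 * εg * (α * ‖d‖) ≤ εh * ‖d‖ * (α * ‖d‖) := by gcongr
      _ = εh * α * ‖d‖ ^ 2 := by ring
  linarith

end ApproximateModel

lemma sqrt_step_length_lt {Lh εg η : ℝ} (hLh : 0 < Lh) (hεg : 0 < εg) (hη : 0 ≤ η) :
    Real.sqrt (2 * εg / (3 * (Lh + η))) < 2 * εg / Real.sqrt (Lh * εg) := by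
  have hprod : 0 < Lh * εg := mul_pos hLh hεg
  rw [Real.sqrt_lt' (by positivity), div_pow, Real.sq_sqrt hprod.le,
    div_lt_div_iff₀ (by positivity) hprod]
  nlinarith [mul_pos hprod hεg]

lemma decrease_at_step_length {Lh εg η : ℝ} (hLη : 0 < Lh + η) (hεg : 0 < εg) :
    εg * Real.sqrt (2 * εg / (3 * (Lh + η))) / 9
        - Lh / 6 * Real.sqrt (2 * εg / (3 * (Lh + η))) ^ 3
      = Real.sqrt 2 * η / (9 * Real.sqrt 3 * (Lh + η) ^ ((3 : ℝ) / 2)) *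
          εg ^ ((3 : ℝ) / 2) := by
  have hpow {y : ℝ} (hy : 0 < y) : y ^ ((3 : ℝ) / 2) = y * Real.sqrt y := by
    rw [show (3 : ℝ) / 2 = 1 + 1 / 2 by norm_num, Real.rpow_add hy, Real.rpow_one,
      Real.sqrt_eq_rpow]
  have hsqrt : Real.sqrt (2 * εg / (3 * (Lh + η)))
      = Real.sqrt 2 * Real.sqrt εg / (Real.sqrt 3 * Real.sqrt (Lh + η)) := by
    rw [Real.sqrt_div (by positivity), Real.sqrt_mul zero_le_two,
      Real.sqrt_mul zero_le_three]
  have h2 : Real.sqrt 2 ^ 2 = 2 := Real.sq_sqrt zero_le_two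
  have h3 : Real.sqrt 3 ^ 2 = 3 := Real.sq_sqrt zero_le_three
  have hε : Real.sqrt εg ^ 2 = εg := Real.sq_sqrt hεg.le
  have hL : Real.sqrt (Lh + η) ^ 2 = Lh + η := Real.sq_sqrt hLη.le
  have : Real.sqrt 3 ≠ 0 := by positivity
  have : Real.sqrt (Lh + η) ≠ 0 := by positivity
  rw [hpow hLη, hpow hεg, hsqrt]
  field_simp
  rw [h2, h3, hε, hL]
  ring

theorem stmt12_general {n : ℕ}
    (f : EuclideanSpace ℝ (Fin n) → ℝ)
    (gx g x d : EuclideanSpace ℝ (Fin n))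
    (A Q : EuclideanSpace ℝ (Fin n) →L[ℝ] EuclideanSpace ℝ (Fin n))
    (Lh εg εh η α : ℝ) (hLh : 0 < Lh) (hεg0 : 0 < εg)
    (hεh : εh = Real.sqrt (Lh * εg)) (hη : 0 < η)
    (hcubic : ∀ u : EuclideanSpace ℝ (Fin n),
      f (x + u) ≤ f x + ⟪gx, u⟫ + (1 / 2) * ⟪u, A u⟫ + Lh / 6 * ‖u‖ ^ 3)
    (hg : ‖g - gx‖ ≤ εg / 3)
    (hQA : ‖Q - A‖ ≤ εh / 18)
    (hdec : ∀ β : ℝ, β ∈ Set.Icc (0 : ℝ) 1 →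
      β * ⟪g, d⟫ + β ^ 2 / 2 * ⟪d, Q d⟫ ≤ -(β / 4) * εh * ‖d‖ ^ 2)
    (hdlarge : ‖d‖ > 2 * εg / εh)
    (hα : α = Real.sqrt (2 * εg / (3 * (Lh + η))) / ‖d‖) :
    (0 < α ∧ α < 1) ∧
      f (x + α • d) ≤ f x -
        Real.sqrt 2 * η / (9 * Real.sqrt 3 * (Lh + η) ^ ((3 : ℝ) / 2)) *
          εg ^ ((3 : ℝ) / 2) := by
  have hεh0 : 0 < εh := hεh ▸ Real.sqrt_pos.2 (mul_pos hLh hεg0)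
  have hd : 0 < ‖d‖ := lt_trans (by positivity) hdlarge
  have hα0 : 0 < α := by rw [hα]; positivity
  have hα1 : α < 1 := by
    rw [hα, div_lt_one hd]
    exact (hεh ▸ sqrt_step_length_lt hLh hεg0 hη.le).trans hdlarge
  have hstep : α * ‖d‖ = Real.sqrt (2 * εg / (3 * (Lh + η))) := by
    rw [hα]; field_simp
  refine ⟨⟨hα0, hα1⟩, ?_⟩
  have hdescent := le_sub_of_sufficient_decrease hcubic hg hQA hα0.le hα1.le
    (hdec α ⟨hα0.le, hα1.le⟩) ((div_lt_iff₀' hεh0).1 hdlarge).le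
  rw [hstep] at hdescent
  linarith [decrease_at_step_length (by positivity : 0 < Lh + η) hεg0]

/-- approximate-Newton-step descent. Under the cubic upper bound,
approximate gradient/Hessian accuracy, the CG decrease property, and
`‖d‖ > 2ε_g/ε_h` with `ε_h = √(L_h ε_g)`, the step size
`α = √(2ε_g/(3(L_h+η)))/‖d‖` satisfies `α ∈ (0,1)` and
`f(x + α d) ≤ f(x) − (√2 η/(9√3 (L_h+η)^{3/2})) ε_g^{3/2}`. -/
theorem stmt12 {n : ℕ}
    (f : EuclideanSpace ℝ (Fin n) → ℝ)
    (gx g x d : EuclideanSpace ℝ (Fin n))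
    (A Q : EuclideanSpace ℝ (Fin n) →L[ℝ] EuclideanSpace ℝ (Fin n))
    (hAsym : ∀ u v, ⟪A u, v⟫ = ⟪u, A v⟫)
    (hQsym : ∀ u v, ⟪Q u, v⟫ = ⟪u, Q v⟫)
    (Lh εg εh η α : ℝ) (hLh : 0 < Lh) (hεg0 : 0 < εg) (hεg1 : εg < Lh)
    (hεh : εh = Real.sqrt (Lh * εg)) (hη : 0 < η)
    (hcubic : ∀ u : EuclideanSpace ℝ (Fin n),
      f (x + u) ≤ f x + ⟪gx, u⟫ + (1 / 2) * ⟪u, A u⟫ + Lh / 6 * ‖u‖ ^ 3)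
    (hg : ‖g - gx‖ ≤ εg / 3)
    (hQA : ‖Q - A‖ ≤ εh / 18)
    (hdec : ∀ β : ℝ, β ∈ Set.Icc (0 : ℝ) 1 →
      β * ⟪g, d⟫ + β ^ 2 / 2 * ⟪d, Q d⟫ ≤ -(β / 4) * εh * ‖d‖ ^ 2)
    (hdlarge : ‖d‖ > 2 * εg / εh)
    (hα : α = Real.sqrt (2 * εg / (3 * (Lh + η))) / ‖d‖) :
    (0 < α ∧ α < 1) ∧
      f (x + α • d) ≤ f x -
        Real.sqrt 2 * η / (9 * Real.sqrt 3 * (Lh + η) ^ ((3 : ℝ) / 2)) *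
          εg ^ ((3 : ℝ) / 2) :=
  stmt12_general f gx g x d A Q Lh εg εh η α hLh hεg0 hεh hη hcubic hg hQA hdec hdlarge hα
end

section
/- Termination certificate (gradient part): suppose ∇²f is L_h-Lipschitz (so ‖∇f(x+d) − ∇f(x) − ∇²f(x)d‖ ≤ (L_h/2)‖d‖²), ‖g − ∇f(x)‖ ≤ ε_g/3, ‖Q − ∇²f(x)‖ ≤ ε_h/18, ‖(Q + 2ε_h I)d + g‖ ≤ μ̂·ε_h·‖d‖, and ‖d‖ ≤ 2ε_g/ε_h with ε_h = √(L_h ε_g). Then ‖∇f(x + d)‖ ≤ (58/9 + 2μ̂)·ε_g. -/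
open scoped RealInnerProductSpace

/-!
Write `∇f(x + d)` as the Taylor remainder `∇f(x + d) − ∇f(x) − A d`, plus the Hessian error
`(A − Q) d`, plus the residual `Q d + 2ε_h d + g`, minus the regularisation `2ε_h d`, minus the
gradient error `g − ∇f(x)`. The step bound `ε_h ‖d‖ ≤ 2ε_g` together with `ε_h² = L_h ε_g` turns
these five terms into `2ε_g`, `ε_g/9`, `2μ̂ ε_g`, `4ε_g` and `ε_g/3`.
-/

theorem norm_le_of_regularized_residual {E : Type*} [NormedAddCommGroup E] [NormedSpace ℝ E]
    (A Q : E →L[ℝ] E) (y y' d g : E) (c : ℝ) :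
    ‖y'‖ ≤ ‖y' - y - A d‖ + ‖A - Q‖ * ‖d‖ + ‖Q d + c • d + g‖ + |c| * ‖d‖ + ‖g - y‖ := by
  have hsplit : y' = (y' - y - A d) + (A - Q) d + (Q d + c • d + g) + -(c • d) + -(g - y) := by
    simp only [sub_apply]
    abel
  calc ‖y'‖
      ≤ ‖y' - y - A d‖ + ‖(A - Q) d‖ + ‖Q d + c • d + g‖ + ‖-(c • d)‖ + ‖-(g - y)‖ := by
        conv_lhs => rw [hsplit]
        exact (norm_add_le _ _).trans (by gcongr; exact norm_add₄_le)
    _ ≤ _ := by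
        rw [norm_neg, norm_neg, norm_smul, Real.norm_eq_abs]
        gcongr
        exact (A - Q).le_opNorm d

theorem stmt13_general {n : ℕ}
    (gradf : EuclideanSpace ℝ (Fin n) → EuclideanSpace ℝ (Fin n))
    (A Q : EuclideanSpace ℝ (Fin n) →L[ℝ] EuclideanSpace ℝ (Fin n))
    (x d g : EuclideanSpace ℝ (Fin n))
    (Lh εg εh μ : ℝ) (hLh : 0 < Lh) (hεg : 0 < εg) (hμ : 0 < μ)
    (hεh : εh = Real.sqrt (Lh * εg))
    (htaylor : ‖gradf (x + d) - gradf x - A d‖ ≤ Lh / 2 * ‖d‖ ^ 2)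
    (hg : ‖g - gradf x‖ ≤ εg / 3)
    (hQA : ‖Q - A‖ ≤ εh / 18)
    (hres : ‖Q d + (2 * εh) • d + g‖ ≤ μ * εh * ‖d‖)
    (hdsmall : ‖d‖ ≤ 2 * εg / εh) :
    ‖gradf (x + d)‖ ≤ (58 / 9 + 2 * μ) * εg := by
  have hεh_pos : 0 < εh := hεh ▸ Real.sqrt_pos.mpr (mul_pos hLh hεg)
  have hεh_sq : εh ^ 2 = Lh * εg := hεh ▸ Real.sq_sqrt (mul_pos hLh hεg).le
  have hstep : εh * ‖d‖ ≤ 2 * εg := (le_div_iff₀' hεh_pos).mp hdsmall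
  have hquadratic : Lh * ‖d‖ ^ 2 ≤ 4 * εg := by
    have : (Lh * ‖d‖ ^ 2) * εg ≤ (4 * εg) * εg := by
      nlinarith [mul_nonneg hεh_pos.le (norm_nonneg d)]
    exact le_of_mul_le_mul_right this hεg
  calc ‖gradf (x + d)‖
      ≤ ‖gradf (x + d) - gradf x - A d‖ + ‖A - Q‖ * ‖d‖ + ‖Q d + (2 * εh) • d + g‖
          + |2 * εh| * ‖d‖ + ‖g - gradf x‖ :=
        norm_le_of_regularized_residual A Q _ _ d g _
    _ ≤ Lh / 2 * ‖d‖ ^ 2 + εh / 18 * ‖d‖ + μ * εh * ‖d‖ + 2 * εh * ‖d‖ + εg / 3 := by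
        rw [norm_sub_rev A, abs_of_pos (by positivity)]
        gcongr
    _ ≤ (58 / 9 + 2 * μ) * εg := by nlinarith

/-- termination certificate, gradient part. If
`‖∇f(x+d) − ∇f(x) − ∇²f(x)d‖ ≤ (L_h/2)‖d‖²`, `‖g − ∇f(x)‖ ≤ ε_g/3`,
`‖Q − ∇²f(x)‖ ≤ ε_h/18`, `‖(Q + 2ε_h I)d + g‖ ≤ μ̂ ε_h ‖d‖`, and
`‖d‖ ≤ 2ε_g/ε_h` with `ε_h = √(L_h ε_g)`, then
`‖∇f(x + d)‖ ≤ (58/9 + 2μ̂)ε_g`. -/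
theorem stmt13 {n : ℕ}
    (gradf : EuclideanSpace ℝ (Fin n) → EuclideanSpace ℝ (Fin n))
    (A Q : EuclideanSpace ℝ (Fin n) →L[ℝ] EuclideanSpace ℝ (Fin n))
    (hAsym : ∀ u v, ⟪A u, v⟫ = ⟪u, A v⟫)
    (hQsym : ∀ u v, ⟪Q u, v⟫ = ⟪u, Q v⟫)
    (x d g : EuclideanSpace ℝ (Fin n))
    (Lh εg εh μ : ℝ) (hLh : 0 < Lh) (hεg : 0 < εg) (hμ : 0 < μ)
    (hεh : εh = Real.sqrt (Lh * εg))
    (htaylor : ‖gradf (x + d) - gradf x - A d‖ ≤ Lh / 2 * ‖d‖ ^ 2)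
    (hg : ‖g - gradf x‖ ≤ εg / 3)
    (hQA : ‖Q - A‖ ≤ εh / 18)
    (hres : ‖Q d + (2 * εh) • d + g‖ ≤ μ * εh * ‖d‖)
    (hdsmall : ‖d‖ ≤ 2 * εg / εh) :
    ‖gradf (x + d)‖ ≤ (58 / 9 + 2 * μ) * εg :=
  stmt13_general gradf A Q x d g Lh εg εh μ hLh hεg hμ hεh htaylor hg hQA hres hdsmall
end

section
/- Termination certificate (Hessian part): suppose ‖∇²f(x+d) − ∇²f(x)‖ ≤ L_h‖d‖, ‖Q − ∇²f(x)‖ ≤ ε_h/18, λ̂ = p̂ᵀQp̂ ≥ −ε_h for a unit vector p̂ with λ̂ − λ_min(Q) ≤ ε_h/2, and ‖d‖ ≤ 2ε_g/ε_h with ε_h = √(L_h ε_g). Then λ_min(∇²f(x + d)) ≥ −(32/9)·√(L_h ε_g). -/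
open scoped RealInnerProductSpace

/-
The Hessian at `x + d` is compared with `Q` in two steps: the quadratic form of `∇²f(x)` is
within `ε_h/18` of that of `Q`, and by the Lipschitz bound that of `∇²f(x + d)` is within
`L_h‖d‖ ≤ 2 ε_h` of that of `∇²f(x)`, the last inequality because `L_h ε_g = ε_h²`.
Since `⟪v, Q v⟫ ≥ (λ̂ - ε_h/2)‖v‖² ≥ -(3/2)ε_h‖v‖²`, the total loss is
`(1 + 1/2 + 1/18 + 2) ε_h = (32/9) ε_h`.
-/

section QuadraticForm

variable {E : Type*} [NormedAddCommGroup E] [InnerProductSpace ℝ E]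

theorem abs_inner_apply_self_le_opNorm_mul_sq (T : E →L[ℝ] E) (v : E) :
    |⟪v, T v⟫| ≤ ‖T‖ * ‖v‖ ^ 2 :=
  calc |⟪v, T v⟫| ≤ ‖v‖ * ‖T v‖ := abs_real_inner_le_norm v (T v)
    _ ≤ ‖v‖ * (‖T‖ * ‖v‖) := mul_le_mul_of_nonneg_left (T.le_opNorm v) (norm_nonneg v)
    _ = ‖T‖ * ‖v‖ ^ 2 := by ring

theorem inner_apply_self_sub_le_of_opNorm_sub_le {S T : E →L[ℝ] E} {c : ℝ}
    (h : ‖T - S‖ ≤ c) (v : E) : ⟪v, S v⟫ - c * ‖v‖ ^ 2 ≤ ⟪v, T v⟫ := by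
  have hTS : ⟪v, (T - S) v⟫ = ⟪v, T v⟫ - ⟪v, S v⟫ := by
    rw [sub_apply, inner_sub_right]
  have hbound := abs_inner_apply_self_le_opNorm_mul_sq (T - S) v
  rw [hTS] at hbound
  nlinarith [neg_abs_le (⟪v, T v⟫ - ⟪v, S v⟫), mul_le_mul_of_nonneg_right h (sq_nonneg ‖v‖)]

end QuadraticForm

/-- When `L ε ≤ 0`, the junk value `2ε / 0 = 0` in the hypothesis forces `r ≤ 0`. -/
theorem mul_le_two_mul_sqrt_of_le_div_sqrt {L ε r : ℝ} (hL : 0 ≤ L)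
    (hr : r ≤ 2 * ε / Real.sqrt (L * ε)) : L * r ≤ 2 * Real.sqrt (L * ε) := by
  rcases (Real.sqrt_nonneg (L * ε)).eq_or_lt with hzero | hpos
  · rw [← hzero, div_zero] at hr
    rw [← hzero, mul_zero]
    exact mul_nonpos_of_nonneg_of_nonpos hL hr
  · have hsq : Real.sqrt (L * ε) ^ 2 = L * ε :=
      Real.sq_sqrt (Real.sqrt_pos.mp hpos).le
    calc L * r ≤ L * (2 * ε / Real.sqrt (L * ε)) := mul_le_mul_of_nonneg_left hr hL
      _ = 2 * Real.sqrt (L * ε) := by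
        field_simp
        linarith

theorem stmt14_general {n : ℕ}
    (A A' Q : EuclideanSpace ℝ (Fin n) →L[ℝ] EuclideanSpace ℝ (Fin n))
    (d : EuclideanSpace ℝ (Fin n))
    (Lh εg εh lamhat : ℝ) (hLh : 0 < Lh)
    (hεh : εh = Real.sqrt (Lh * εg))
    -- Hessian Lipschitz bound between x and x + d
    (hHessLip : ‖A' - A‖ ≤ Lh * ‖d‖)
    (hQA : ‖Q - A‖ ≤ εh / 18)
    (hlamlb : lamhat ≥ -εh)
    -- λ̂ − λ_min(Q) ≤ ε_h/2
    (hacc : ∀ v : EuclideanSpace ℝ (Fin n),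
      (lamhat - εh / 2) * ‖v‖ ^ 2 ≤ ⟪v, Q v⟫)
    (hdsmall : ‖d‖ ≤ 2 * εg / εh) :
    ∀ v : EuclideanSpace ℝ (Fin n),
      -(32 / 9) * Real.sqrt (Lh * εg) * ‖v‖ ^ 2 ≤ ⟪v, A' v⟫ := by
  intro v
  have hLd : Lh * ‖d‖ ≤ 2 * εh :=
    hεh ▸ mul_le_two_mul_sqrt_of_le_div_sqrt hLh.le (hεh ▸ hdsmall)
  have hA : ⟪v, Q v⟫ - εh / 18 * ‖v‖ ^ 2 ≤ ⟪v, A v⟫ :=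
    inner_apply_self_sub_le_of_opNorm_sub_le (by rwa [norm_sub_rev]) v
  have hA' : ⟪v, A v⟫ - 2 * εh * ‖v‖ ^ 2 ≤ ⟪v, A' v⟫ :=
    inner_apply_self_sub_le_of_opNorm_sub_le (hHessLip.trans hLd) v
  have hlamv : -εh * ‖v‖ ^ 2 ≤ lamhat * ‖v‖ ^ 2 :=
    mul_le_mul_of_nonneg_right hlamlb (sq_nonneg _)
  rw [← hεh]
  linarith [hacc v]

/-- termination certificate, Hessian part. If
`‖∇²f(x+d) − ∇²f(x)‖ ≤ L_h‖d‖`, `‖Q − ∇²f(x)‖ ≤ ε_h/18`,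
`λ̂ = p̂ᵀQp̂ ≥ −ε_h` for a unit vector `p̂` with `λ̂ − λ_min(Q) ≤ ε_h/2`
(encoded as the quadratic-form bound `⟪v, Q v⟫ ≥ (λ̂ − ε_h/2)‖v‖²`), and
`‖d‖ ≤ 2ε_g/ε_h` with `ε_h = √(L_h ε_g)`, then
`λ_min(∇²f(x+d)) ≥ −(32/9)√(L_h ε_g)` (as a quadratic-form bound). -/
theorem stmt14 {n : ℕ}
    (A A' Q : EuclideanSpace ℝ (Fin n) →L[ℝ] EuclideanSpace ℝ (Fin n))
    (hAsym : ∀ u v, ⟪A u, v⟫ = ⟪u, A v⟫)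
    (hA'sym : ∀ u v, ⟪A' u, v⟫ = ⟪u, A' v⟫)
    (hQsym : ∀ u v, ⟪Q u, v⟫ = ⟪u, Q v⟫)
    (d p : EuclideanSpace ℝ (Fin n)) (hp : ‖p‖ = 1)
    (Lh εg εh lamhat : ℝ) (hLh : 0 < Lh) (hεg : 0 < εg)
    (hεh : εh = Real.sqrt (Lh * εg))
    -- Hessian Lipschitz bound between x and x + d
    (hHessLip : ‖A' - A‖ ≤ Lh * ‖d‖)
    (hQA : ‖Q - A‖ ≤ εh / 18)
    (hlam : lamhat = ⟪p, Q p⟫) (hlamlb : lamhat ≥ -εh)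
    -- λ̂ − λ_min(Q) ≤ ε_h/2
    (hacc : ∀ v : EuclideanSpace ℝ (Fin n),
      (lamhat - εh / 2) * ‖v‖ ^ 2 ≤ ⟪v, Q v⟫)
    (hdsmall : ‖d‖ ≤ 2 * εg / εh) :
    ∀ v : EuclideanSpace ℝ (Fin n),
      -(32 / 9) * Real.sqrt (Lh * εg) * ‖v‖ ^ 2 ≤ ⟪v, A' v⟫ :=
  stmt14_general A A' Q d Lh εg εh lamhat hLh hεh hHessLip hQA hlamlb hacc hdsmall
end
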